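/- arXiv:1703.01660 — 2 statements merged into one kernel-verified Lean document; each statement's English description precedes it below -/
import Mathlib

section
/- The number of connected components of the complement of an arrangement of m lines in general position in the real projective plane equals binom(m,2) + 1. -/
open Projectivization

/-- The real projective plane as the projectivization of `ℝ³`. -/
abbrev RP2 := Projectivization ℝ (Fin 3 → ℝ)

/-- The quotient topology on the real projective plane, inherited from `ℝ³ \ {0}`. -/
noncomputable instance : TopologicalSpace RP2 :=
  instTopologicalSpaceQuotient (s := projectivizationSetoid ℝ (Fin 3 → ℝ))

/-- The projective line in `RP²` cut out by a nonzero linear form `v`,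
i.e. all points whose (every) representative is orthogonal to `v`. -/
def projLine (v : Fin 3 → ℝ) : Set RP2 :=
  {p : RP2 | ∑ k, v k * p.rep k = 0}

/-!
Pull the lines back to the planes `v i ⬝ᵥ x = 0` in `ℝ³`. The complement of these planes is the
disjoint union of the chambers `{x | sign (v i ⬝ᵥ x) = ε i for all i}`, which are open convex
cones, and a component of the complement in `RP²` is the image of an antipodal pair `±C` of
chambers. Counting chambers is done by deletion–restriction: adding a hyperplane `ker g` adds one
chamber for each chamber it cuts, i.e. for each chamber of the arrangement induced on `ker g`.
General position (any at most `n` of the forms are linearly independent, `n` the dimension) passes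
to the restriction, so by induction `m + 1` hyperplanes in general position have
`2 * ∑ i < n, C(m, i)` chambers; for `n = 3` that is `2 * (C(m + 1, 2) + 1)`.
-/

open Function Module Set Filter Topology

theorem sum_range_choose_succ (m k : ℕ) :
    ∑ i ∈ Finset.range (k + 1), (m + 1).choose i =
      ∑ i ∈ Finset.range (k + 1), m.choose i + ∑ i ∈ Finset.range k, m.choose i := by
  induction k with
  | zero => simp
  | succ k ih =>
    rw [Finset.sum_range_succ, ih, Nat.choose_succ_succ', Finset.sum_range_succ _ (k + 1),
      Finset.sum_range_succ _ k]
    ring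

namespace HyperplaneArrangement

variable {E : Type*} [AddCommGroup E] [Module ℝ E]

def openHalfSpace (φ : Dual ℝ E) : Bool → Set E
  | true => {x | 0 < φ x}
  | false => {x | φ x < 0}

section openHalfSpace

variable {φ : Dual ℝ E} {b b' : Bool} {x : E}

@[simp] theorem mem_openHalfSpace_true : x ∈ openHalfSpace φ true ↔ 0 < φ x := Iff.rfl

@[simp] theorem mem_openHalfSpace_false : x ∈ openHalfSpace φ false ↔ φ x < 0 := Iff.rfl

theorem map_ne_zero_of_mem_openHalfSpace (hx : x ∈ openHalfSpace φ b) : φ x ≠ 0 := by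
  cases b
  · exact ne_of_lt (by simpa using hx)
  · exact ne_of_gt (by simpa using hx)

theorem eq_of_mem_openHalfSpace (hb : x ∈ openHalfSpace φ b) (hb' : x ∈ openHalfSpace φ b') :
    b = b' := by
  cases b <;> cases b' <;> simp only [mem_openHalfSpace_true, mem_openHalfSpace_false] at hb hb'
  · rfl
  · exact (lt_asymm hb hb').elim
  · exact (lt_asymm hb hb').elim
  · rfl

theorem mem_openHalfSpace_decide (hx : φ x ≠ 0) : x ∈ openHalfSpace φ (decide (0 < φ x)) := by
  by_cases h : 0 < φ x
  · simp [h]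
  · simpa [h] using lt_of_le_of_ne (not_lt.1 h) hx

theorem neg_mem_openHalfSpace_iff : -x ∈ openHalfSpace φ b ↔ x ∈ openHalfSpace φ !b := by
  cases b <;> simp

theorem smul_mem_openHalfSpace_iff {c : ℝ} (hc : 0 < c) :
    c • x ∈ openHalfSpace φ b ↔ x ∈ openHalfSpace φ b := by
  cases b <;> simp only [mem_openHalfSpace_true, mem_openHalfSpace_false, map_smul, smul_eq_mul]
  · rw [← neg_pos, ← mul_neg, mul_pos_iff_of_pos_left hc, neg_pos]
  · exact mul_pos_iff_of_pos_left hc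

theorem convex_openHalfSpace : Convex ℝ (openHalfSpace φ b) := by
  cases b
  · exact convex_halfSpace_lt φ.isLinear 0
  · exact convex_halfSpace_gt φ.isLinear 0

theorem eventually_add_smul_mem_openHalfSpace (hx : x ∈ openHalfSpace φ b) (y : E) :
    ∀ᶠ t in 𝓝 (0 : ℝ), x + t • y ∈ openHalfSpace φ b := by
  have hcont : Continuous fun t : ℝ => φ (x + t • y) := by
    simp only [map_add, map_smul, smul_eq_mul]
    fun_prop
  cases b
  · exact hcont.continuousAt.eventually_lt continuousAt_const (by simpa using hx)
  · exact continuousAt_const.eventually_lt hcont.continuousAt (by simpa using hx)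

theorem isOpen_openHalfSpace [TopologicalSpace E] (hφ : Continuous φ) :
    IsOpen (openHalfSpace φ b) := by
  cases b
  · exact isOpen_lt hφ continuous_const
  · exact isOpen_lt continuous_const hφ

end openHalfSpace

variable {ι : Type*}

def chamber (f : ι → Dual ℝ E) (ε : ι → Bool) : Set E :=
  ⋂ i, openHalfSpace (f i) (ε i)

def chamberSigns (f : ι → Dual ℝ E) : Set (ι → Bool) :=
  {ε | (chamber f ε).Nonempty}

section chamber

variable {f : ι → Dual ℝ E} {ε ε' : ι → Bool} {x : E}

theorem mem_chamber : x ∈ chamber f ε ↔ ∀ i, x ∈ openHalfSpace (f i) (ε i) := mem_iInter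

theorem map_ne_zero_of_mem_chamber (hx : x ∈ chamber f ε) (i : ι) : f i x ≠ 0 :=
  map_ne_zero_of_mem_openHalfSpace (mem_chamber.1 hx i)

theorem ne_zero_of_mem_chamber [Nonempty ι] (hx : x ∈ chamber f ε) : x ≠ 0 := by
  rintro rfl
  exact map_ne_zero_of_mem_chamber hx (Classical.arbitrary ι) (map_zero _)

theorem eq_of_mem_chamber (hε : x ∈ chamber f ε) (hε' : x ∈ chamber f ε') : ε = ε' :=
  funext fun i => eq_of_mem_openHalfSpace (mem_chamber.1 hε i) (mem_chamber.1 hε' i)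

theorem mem_chamber_decide (hx : ∀ i, f i x ≠ 0) : x ∈ chamber f fun i => decide (0 < f i x) :=
  mem_chamber.2 fun i => mem_openHalfSpace_decide (hx i)

theorem neg_mem_chamber_iff : -x ∈ chamber f ε ↔ x ∈ chamber f (not ∘ ε) := by
  simp only [mem_chamber, neg_mem_openHalfSpace_iff, comp_apply]

theorem neg_mem_chamber_not_comp_iff : -x ∈ chamber f (not ∘ ε) ↔ x ∈ chamber f ε := by
  simp only [mem_chamber, neg_mem_openHalfSpace_iff, comp_apply, Bool.not_not]

theorem smul_mem_chamber_iff {c : ℝ} (hc : 0 < c) : c • x ∈ chamber f ε ↔ x ∈ chamber f ε := by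
  simp only [mem_chamber, smul_mem_openHalfSpace_iff hc]

theorem convex_chamber : Convex ℝ (chamber f ε) :=
  convex_iInter fun _ => convex_openHalfSpace

theorem isOpen_chamber [Finite ι] [TopologicalSpace E] (hf : ∀ i, Continuous (f i)) :
    IsOpen (chamber f ε) :=
  isOpen_iInter_of_finite fun i => isOpen_openHalfSpace (hf i)

theorem eventually_add_smul_mem_chamber [Finite ι] (hx : x ∈ chamber f ε) (y : E) :
    ∀ᶠ t in 𝓝 (0 : ℝ), x + t • y ∈ chamber f ε := by
  simp only [mem_chamber]
  exact eventually_all.2 fun i => eventually_add_smul_mem_openHalfSpace (mem_chamber.1 hx i) y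

theorem chamber_cons {k : ℕ} (g : Dual ℝ E) (f : Fin k → Dual ℝ E) (ε : Fin (k + 1) → Bool) :
    chamber (Fin.cons g f) ε = openHalfSpace g (ε 0) ∩ chamber f (Fin.tail ε) := by
  ext x
  simp only [mem_inter_iff, mem_chamber, Fin.forall_fin_succ, Fin.cons_zero, Fin.cons_succ,
    Fin.tail]

theorem mem_chamber_dualRestrict_iff {K : Submodule ℝ E} {y : K} :
    y ∈ chamber (fun i => K.dualRestrict (f i)) ε ↔ (y : E) ∈ chamber f ε := by
  cases y
  simp only [mem_chamber]
  refine forall_congr' fun i => ?_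
  cases ε i <;> simp

theorem smul_mem_chamber_or_neg_mem_iff {c : ℝ} (hc : c ≠ 0) :
    c • x ∈ chamber f ε ∨ -(c • x) ∈ chamber f ε ↔ x ∈ chamber f ε ∨ -x ∈ chamber f ε := by
  rcases hc.lt_or_gt with hc | hc
  · rw [← neg_smul, show c • x = -c • -x by simp, smul_mem_chamber_iff (neg_pos.2 hc),
      smul_mem_chamber_iff (neg_pos.2 hc), or_comm]
  · rw [← smul_neg, smul_mem_chamber_iff hc, smul_mem_chamber_iff hc]

end chamber

section count

variable {f : ι → Dual ℝ E} {ε : ι → Bool} {x y : E} {g : Dual ℝ E}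

theorem chamberSigns_eq_univ [IsEmpty ι] : chamberSigns f = univ :=
  eq_univ_of_forall fun _ => ⟨0, mem_chamber.2 isEmptyElim⟩

theorem chamberSigns_eq_empty_of_finrank_eq_zero [Nonempty ι] [FiniteDimensional ℝ E]
    (hE : finrank ℝ E = 0) : chamberSigns f = ∅ :=
  eq_empty_of_forall_notMem fun _ ⟨x, hx⟩ =>
    ne_zero_of_mem_chamber hx (finrank_zero_iff_forall_zero.1 hE x)

theorem not_comp_mem_chamberSigns_iff : not ∘ ε ∈ chamberSigns f ↔ ε ∈ chamberSigns f := by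
  constructor
  · rintro ⟨x, hx⟩
    exact ⟨-x, neg_mem_chamber_iff.2 hx⟩
  · rintro ⟨x, hx⟩
    exact ⟨-x, by rwa [← neg_mem_chamber_iff, neg_neg]⟩

theorem two_mul_ncard_chamberSigns_apply_eq_true [Finite ι] (i : ι) :
    2 * {ε ∈ chamberSigns f | ε i = true}.ncard = (chamberSigns f).ncard := by
  set A := {ε ∈ chamberSigns f | ε i = true}
  have hsplit : chamberSigns f = A ∪ (not ∘ ·) '' A := by
    ext ε
    simp only [A, mem_union, mem_image, mem_ofPred_eq]
    constructor
    · intro hε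
      cases h : ε i
      · exact Or.inr ⟨not ∘ ε, ⟨not_comp_mem_chamberSigns_iff.2 hε, by simp [h]⟩,
          funext fun _ => Bool.not_not _⟩
      · exact Or.inl ⟨hε, rfl⟩
    · rintro (⟨hε, -⟩ | ⟨ε, ⟨hε, -⟩, rfl⟩)
      · exact hε
      · exact not_comp_mem_chamberSigns_iff.2 hε
  have hdisj : Disjoint A ((not ∘ ·) '' A) := by
    rw [disjoint_left]
    rintro _ ⟨-, hi⟩ ⟨ε, ⟨-, hε⟩, rfl⟩
    simp [hε] at hi
  rw [hsplit, ncard_union_eq hdisj (toFinite _) (toFinite _),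
    ncard_image_of_injective _ Bool.not_injective.comp_left, two_mul]

theorem openHalfSpace_inter_chamber_nonempty [Finite ι] (hg : g ≠ 0) (hx : x ∈ chamber f ε)
    (hgx : g x = 0) (b : Bool) : (openHalfSpace g b ∩ chamber f ε).Nonempty := by
  obtain ⟨y, hy⟩ : ∃ y, g y = 1 := by
    obtain ⟨y, hy⟩ := DFunLike.ne_iff.1 hg
    exact ⟨(g y)⁻¹ • y, by simpa using inv_mul_cancel₀ hy⟩
  -- `g (x + t • y) = t`, and `x + t • y` stays in the chamber for small `|t|`.
  have hnear := eventually_add_smul_mem_chamber hx y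
  obtain ⟨t, ⟨htx, htx'⟩, ht⟩ := ((hnear.and ((continuous_neg.tendsto' 0 0 neg_zero).eventually
    hnear)).filter_mono nhdsWithin_le_nhds |>.and self_mem_nhdsWithin).exists (f := 𝓝[>] 0)
  cases b
  · exact ⟨_, by simpa [hgx, hy] using ht, htx'⟩
  · exact ⟨_, by simpa [hgx, hy] using ht, htx⟩

theorem exists_mem_chamber_map_eq_zero (hx : x ∈ chamber f ε) (hy : y ∈ chamber f ε)
    (hgx : 0 < g x) (hgy : g y < 0) : ∃ z ∈ chamber f ε, g z = 0 := by
  have hpos : 0 < g x - g y := by linarith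
  refine ⟨(-g y / (g x - g y)) • x + (g x / (g x - g y)) • y,
    convex_chamber hx hy (div_nonneg (by linarith) hpos.le) (div_nonneg hgx.le hpos.le) ?_, ?_⟩
  · field_simp
    ring
  · simp only [map_add, map_smul, smul_eq_mul]
    field_simp
    ring

def signsMeeting (f : ι → Dual ℝ E) (s : Set E) : Set (ι → Bool) :=
  {ε | (s ∩ chamber f ε).Nonempty}

theorem chamberSigns_cons {k : ℕ} (f : Fin k → Dual ℝ E) :
    chamberSigns (Fin.cons g f : Fin (k + 1) → Dual ℝ E) =
      Fin.cons true '' signsMeeting f (openHalfSpace g true) ∪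
        Fin.cons false '' signsMeeting f (openHalfSpace g false) := by
  ext ε
  simp only [chamberSigns, signsMeeting, chamber_cons, mem_ofPred_eq, mem_union, mem_image]
  constructor
  · intro hε
    cases h : ε 0
    · exact Or.inr ⟨Fin.tail ε, h ▸ hε, h ▸ Fin.cons_self_tail ε⟩
    · exact Or.inl ⟨Fin.tail ε, h ▸ hε, h ▸ Fin.cons_self_tail ε⟩
  · rintro (⟨δ, hδ, rfl⟩ | ⟨δ, hδ, rfl⟩) <;> simpa using hδ

theorem signsMeeting_union [Finite ι] (hg : g ≠ 0) :
    signsMeeting f (openHalfSpace g true) ∪ signsMeeting f (openHalfSpace g false) =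
      chamberSigns f := by
  ext ε
  constructor
  · rintro (⟨x, -, hx⟩ | ⟨x, -, hx⟩) <;> exact ⟨x, hx⟩
  · rintro ⟨x, hx⟩
    rcases lt_trichotomy (g x) 0 with hgx | hgx | hgx
    · exact Or.inr ⟨x, hgx, hx⟩
    · exact Or.inl (openHalfSpace_inter_chamber_nonempty hg hx hgx true)
    · exact Or.inl ⟨x, hgx, hx⟩

theorem signsMeeting_inter [Finite ι] (hg : g ≠ 0) :
    signsMeeting f (openHalfSpace g true) ∩ signsMeeting f (openHalfSpace g false) =
      chamberSigns fun i => (LinearMap.ker g).dualRestrict (f i) := by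
  ext ε
  constructor
  · rintro ⟨⟨x, hgx, hx⟩, ⟨y, hgy, hy⟩⟩
    obtain ⟨z, hz, hgz⟩ := exists_mem_chamber_map_eq_zero hx hy hgx hgy
    exact ⟨⟨z, hgz⟩, mem_chamber_dualRestrict_iff.2 hz⟩
  · rintro ⟨z, hz⟩
    have hz' := mem_chamber_dualRestrict_iff.1 hz
    exact ⟨openHalfSpace_inter_chamber_nonempty hg hz' z.2 true,
      openHalfSpace_inter_chamber_nonempty hg hz' z.2 false⟩

theorem ncard_chamberSigns_cons {k : ℕ} (hg : g ≠ 0) (f : Fin k → Dual ℝ E) :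
    (chamberSigns (Fin.cons g f : Fin (k + 1) → Dual ℝ E)).ncard =
      (chamberSigns f).ncard +
        (chamberSigns fun i => (LinearMap.ker g).dualRestrict (f i)).ncard := by
  have hdisj : Disjoint (Fin.cons true '' signsMeeting f (openHalfSpace g true))
      (Fin.cons false '' signsMeeting f (openHalfSpace g false) : Set (Fin (k + 1) → Bool)) := by
    rw [disjoint_left]
    rintro _ ⟨δ, -, rfl⟩ ⟨δ', -, h⟩
    simpa using congrFun h 0
  rw [chamberSigns_cons, ncard_union_eq hdisj (toFinite _) (toFinite _),
    ncard_image_of_injective _ (Fin.cons_right_injective _),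
    ncard_image_of_injective _ (Fin.cons_right_injective _), ← signsMeeting_union hg,
    ← signsMeeting_inter hg, ncard_union_add_ncard_inter]

end count

theorem ker_dualRestrict_ker_le_span (g : Dual ℝ E) :
    LinearMap.ker (LinearMap.ker g).dualRestrict ≤ ℝ ∙ g := by
  intro φ hφ
  have hle : ⨅ _ : Unit, LinearMap.ker g ≤ LinearMap.ker φ := fun x hx =>
    LinearMap.congr_fun hφ ⟨x, by simpa using hx⟩
  simpa using mem_span_of_iInf_ker_le_ker hle

theorem apply_eq_zero_of_mem_span {φ : Dual ℝ E} {t : Set (Dual ℝ E)}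
    (hφ : φ ∈ Submodule.span ℝ t) {x : E} (hx : ∀ ψ ∈ t, ψ x = 0) : φ x = 0 :=
  (Submodule.span_le (p := LinearMap.ker (Dual.eval ℝ E x))).2 hx hφ

theorem ker_inf_ker_ne_bot [FiniteDimensional ℝ E] (hE : 2 < finrank ℝ E) (φ ψ : Dual ℝ E) :
    LinearMap.ker φ ⊓ LinearMap.ker ψ ≠ ⊥ := by
  intro hbot
  have hdim := Submodule.finrank_sup_add_finrank_inf_eq (LinearMap.ker φ) (LinearMap.ker ψ)
  have hsup := Submodule.finrank_le (LinearMap.ker φ ⊔ LinearMap.ker ψ)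
  have hφ := LinearMap.finrank_range_add_finrank_ker φ
  have hψ := LinearMap.finrank_range_add_finrank_ker ψ
  have hφ' := Submodule.finrank_le (LinearMap.range φ)
  have hψ' := Submodule.finrank_le (LinearMap.range ψ)
  rw [hbot, finrank_bot] at hdim
  rw [finrank_self] at hφ' hψ'
  omega

def InGeneralPosition (f : ι → Dual ℝ E) : Prop :=
  ∀ s : Finset ι, s.card ≤ finrank ℝ E → LinearIndepOn ℝ f s

namespace InGeneralPosition

variable {f : ι → Dual ℝ E}

theorem ne_zero (hf : InGeneralPosition f) (hE : finrank ℝ E ≠ 0) (i : ι) : f i ≠ 0 := by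
  simpa using hf {i} (by simpa [Nat.one_le_iff_ne_zero] using hE)

theorem comp {ι' : Type*} (hf : InGeneralPosition f) {e : ι' → ι} (he : Injective e) :
    InGeneralPosition (f ∘ e) := fun s hs => by
  have := hf (s.map ⟨e, he⟩) (by simpa using hs)
  rw [Finset.coe_map] at this
  exact this.comp_of_image he.injOn

theorem of_cons {k : ℕ} {g : Dual ℝ E} {f : Fin k → Dual ℝ E}
    (hf : InGeneralPosition (Fin.cons g f : Fin (k + 1) → Dual ℝ E)) : InGeneralPosition f :=
  Fin.cons_comp_succ g f ▸ hf.comp (Fin.succ_injective k)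

theorem dualRestrict [FiniteDimensional ℝ E] {k : ℕ} {g : Dual ℝ E} {f : Fin k → Dual ℝ E}
    (hf : InGeneralPosition (Fin.cons g f : Fin (k + 1) → Dual ℝ E)) (hg : g ≠ 0) :
    InGeneralPosition fun i => (LinearMap.ker g).dualRestrict (f i) := by
  intro s hs
  have hcard : (insert 0 (s.map (Fin.succEmb k))).card ≤ finrank ℝ E := by
    rw [Finset.card_insert_of_notMem (by simp), Finset.card_map,
      ← Dual.finrank_ker_add_one_of_ne_zero hg]
    omega
  have hli := hf _ hcard
  rw [Finset.coe_insert, Finset.coe_map, linearIndepOn_insert (by simp)] at hli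
  obtain ⟨hli, hg_notMem⟩ := hli
  replace hli : LinearIndepOn ℝ f s := hli.comp_of_image (Fin.succ_injective _).injOn
  simp only [Fin.coe_succEmb, image_image, Fin.cons_succ, Fin.cons_zero] at hg_notMem
  have hdisj : Disjoint (Submodule.span ℝ (range fun i : s => f i))
      (LinearMap.ker (LinearMap.ker g).dualRestrict) :=
    ((Submodule.disjoint_span_singleton' hg).2 (by rwa [image_eq_range] at hg_notMem)).mono_right
      (ker_dualRestrict_ker_le_span g)
  exact hli.map hdisj

end InGeneralPosition

theorem ncard_chamberSigns_of_inGeneralPosition [FiniteDimensional ℝ E] {m : ℕ}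
    {f : Fin (m + 1) → Dual ℝ E} (hf : InGeneralPosition f) :
    (chamberSigns f).ncard = 2 * ∑ i ∈ Finset.range (finrank ℝ E), m.choose i := by
  induction m generalizing E with
  | zero =>
    cases hE : finrank ℝ E with
    | zero => simp [chamberSigns_eq_empty_of_finrank_eq_zero hE]
    | succ n =>
      induction f using Fin.consCases with | cons g f =>
      rw [ncard_chamberSigns_cons (by simpa using hf.ne_zero (by omega) 0)]
      simp [chamberSigns_eq_univ, Finset.sum_range_succ']
  | succ m ih =>
    cases hE : finrank ℝ E with
    | zero => simp [chamberSigns_eq_empty_of_finrank_eq_zero hE]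
    | succ n =>
      induction f using Fin.consCases with | cons g f =>
      have hg : g ≠ 0 := by simpa using hf.ne_zero (by omega) 0
      have hker : finrank ℝ (LinearMap.ker g) = n := by
        have := Dual.finrank_ker_add_one_of_ne_zero hg
        omega
      rw [ncard_chamberSigns_cons hg, ih hf.of_cons, ih (hf.dualRestrict hg), hE, hker,
        sum_range_choose_succ]
      ring

theorem inGeneralPosition_of_finrank_eq_three [FiniteDimensional ℝ E] (hE : finrank ℝ E = 3)
    {f : ι → Dual ℝ E} (h0 : ∀ i, f i ≠ 0)
    (h2 : ∀ i j, i ≠ j → LinearMap.ker (f i) ≠ LinearMap.ker (f j))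
    (h3 : ∀ i j k, i ≠ j → j ≠ k → i ≠ k →
      LinearMap.ker (f i) ⊓ LinearMap.ker (f j) ⊓ LinearMap.ker (f k) = ⊥) :
    InGeneralPosition f := by
  classical
  have hker (i : ι) : finrank ℝ (LinearMap.ker (f i)) = 2 := by
    have := Dual.finrank_ker_add_one_of_ne_zero (h0 i)
    omega
  intro s hs
  rw [linearIndepOn_iff_notMem_span]
  intro i hi hspan
  rw [← Finset.coe_erase] at hspan
  have hvanish : ∀ x, (∀ j ∈ s.erase i, f j x = 0) → f i x = 0 := fun x hx =>
    apply_eq_zero_of_mem_span hspan (by rintro _ ⟨j, hj, rfl⟩; exact hx j hj)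
  have hi' : i ∉ s.erase i := Finset.notMem_erase i s
  obtain hc | hc | hc : (s.erase i).card = 0 ∨ (s.erase i).card = 1 ∨ (s.erase i).card = 2 := by
    rw [Finset.card_erase_of_mem hi]
    omega
  · rw [Finset.card_eq_zero] at hc
    exact h0 i (LinearMap.ext fun x => hvanish x (by simp [hc]))
  · obtain ⟨j, hj⟩ := Finset.card_eq_one.1 hc
    have hle : LinearMap.ker (f j) ≤ LinearMap.ker (f i) := fun x hx =>
      hvanish x (by simpa [hj] using hx)
    exact h2 j i (by rintro rfl; simp [hj] at hi')
      (Submodule.eq_of_le_of_finrank_eq hle (by rw [hker, hker]))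
  · obtain ⟨j, k, hjk, hjk'⟩ := Finset.card_eq_two.1 hc
    have hle : LinearMap.ker (f j) ⊓ LinearMap.ker (f k) ≤ LinearMap.ker (f i) := fun x hx =>
      hvanish x (by simpa [hjk'] using hx)
    apply ker_inf_ker_ne_bot (by omega) (f j) (f k)
    rw [← inf_eq_right.2 hle, ← inf_assoc]
    exact h3 i j k (by rintro rfl; simp [hjk'] at hi') hjk (by rintro rfl; simp [hjk'] at hi')

end HyperplaneArrangement

open HyperplaneArrangement

theorem isClosed_of_pairwise_disjoint_cover {X ι : Type*} [TopologicalSpace X] {U : ι → Set X}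
    (hopen : ∀ i, IsOpen (U i)) (hdisj : Pairwise (Disjoint on U)) (hunion : ⋃ i, U i = univ)
    (i : ι) : IsClosed (U i) := by
  have hcompl : (U i)ᶜ = ⋃ (j) (_ : j ≠ i), U j := by
    ext x
    obtain ⟨j, hj⟩ := mem_iUnion.1 (hunion ▸ mem_univ x : x ∈ ⋃ i, U i)
    simp only [mem_compl_iff, mem_iUnion]
    refine ⟨fun hx => ⟨j, fun h => hx (h ▸ hj), hj⟩, ?_⟩
    rintro ⟨k, hki, hk⟩ hx
    exact disjoint_left.1 (hdisj hki) hk hx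
  rw [← isOpen_compl_iff, hcompl]
  exact isOpen_biUnion fun j _ => hopen j

theorem natCard_connectedComponents_of_partition {X ι : Type*} [TopologicalSpace X] {S : Set X}
    (U : ι → Set X) (hopen : ∀ i, IsOpen (U i)) (hconn : ∀ i, IsConnected (U i))
    (hdisj : Pairwise (Disjoint on U)) (hunion : ⋃ i, U i = S) :
    Nat.card (ConnectedComponents S) = Nat.card ι := by
  set V : ι → Set S := fun i => Subtype.val ⁻¹' U i
  have hVopen (i : ι) : IsOpen (V i) := (hopen i).preimage continuous_subtype_val
  have hVdisj : Pairwise (Disjoint on V) := fun i j hij => (hdisj hij).preimage _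
  have hVunion : ⋃ i, V i = univ := by
    simp only [V, ← preimage_iUnion, hunion, Subtype.coe_preimage_self]
  have hVconn (i : ι) : IsConnected (V i) := by
    have himage : Subtype.val '' V i = U i := by
      rw [Subtype.image_preimage_coe, inter_eq_right.2 (hunion ▸ subset_iUnion U i)]
    refine ⟨(himage ▸ (hconn i).nonempty).of_image, ?_⟩
    rw [← IsInducing.subtypeVal.isPreconnected_image, himage]
    exact (hconn i).isPreconnected
  exact Nat.card_congr
    (ConnectedComponents.equivOfIsClopenOfIsConnected
      (fun i => ⟨isClosed_of_pairwise_disjoint_cover hVopen hVdisj hVunion i, hVopen i⟩)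
      hVdisj hVunion hVconn)

namespace RP2

theorem continuous_mk' : Continuous (mk' ℝ : {v : Fin 3 → ℝ // v ≠ 0} → RP2) :=
  continuous_quotient_mk'

theorem isQuotientMap_mk' : IsQuotientMap (mk' ℝ : {v : Fin 3 → ℝ // v ≠ 0} → RP2) :=
  isQuotientMap_quotient_mk'

instance : ConnectedSpace RP2 :=
  have : ConnectedSpace {v : Fin 3 → ℝ // v ≠ 0} := isConnected_iff_connectedSpace.1
    (isConnected_compl_singleton_of_one_lt_rank (by simp) 0)
  Quotient.mk''_surjective.connectedSpace continuous_mk'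

theorem mem_projLine_iff {v : Fin 3 → ℝ} {p : RP2} :
    p ∈ projLine v ↔ dotProductEquiv ℝ (Fin 3) v p.rep = 0 := Iff.rfl

theorem mk_mem_projLine_iff {v x : Fin 3 → ℝ} (hx : x ≠ 0) :
    mk ℝ x hx ∈ projLine v ↔ dotProductEquiv ℝ (Fin 3) v x = 0 := by
  obtain ⟨a, ha⟩ := exists_smul_eq_mk_rep ℝ x hx
  rw [mem_projLine_iff, ← ha, Units.smul_def, map_smul, smul_eq_mul, mul_eq_zero]
  simp

variable {ι : Type*}

def region (f : ι → Dual ℝ (Fin 3 → ℝ)) (ε : ι → Bool) : Set RP2 :=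
  {p | p.rep ∈ chamber f ε ∨ -p.rep ∈ chamber f ε}

variable {f : ι → Dual ℝ (Fin 3 → ℝ)} {ε ε' : ι → Bool}

theorem mk_mem_region_iff {x : Fin 3 → ℝ} (hx : x ≠ 0) :
    mk ℝ x hx ∈ region f ε ↔ x ∈ chamber f ε ∨ -x ∈ chamber f ε := by
  obtain ⟨a, ha⟩ := exists_smul_eq_mk_rep ℝ x hx
  change (mk ℝ x hx).rep ∈ chamber f ε ∨ -(mk ℝ x hx).rep ∈ chamber f ε ↔ _
  rw [← ha, Units.smul_def, smul_mem_chamber_or_neg_mem_iff a.ne_zero]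

theorem isOpen_region [Finite ι] : IsOpen (region f ε) := by
  have hC : IsOpen (chamber f ε) :=
    isOpen_chamber fun i => LinearMap.continuous_of_finiteDimensional (f i)
  have hpre : mk' ℝ ⁻¹' region f ε = {v | v.1 ∈ chamber f ε ∨ -v.1 ∈ chamber f ε} := by
    ext v
    exact mk_mem_region_iff v.2
  rw [← isQuotientMap_mk'.isOpen_preimage, hpre]
  exact (hC.preimage continuous_subtype_val).union (hC.preimage continuous_subtype_val.neg)

theorem isConnected_region [Nonempty ι] (hε : ε ∈ chamberSigns f) : IsConnected (region f ε) := by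
  have : ConnectedSpace (chamber f ε) :=
    isConnected_iff_connectedSpace.1 (convex_chamber.isConnected hε)
  have hrange : range (fun x : chamber f ε => mk ℝ x.1 (ne_zero_of_mem_chamber x.2)) =
      region f ε := by
    ext p
    induction p using Projectivization.ind with | h x hx =>
    rw [mk_mem_region_iff hx]
    constructor
    · rintro ⟨⟨y, hy⟩, hyx⟩
      exact (mk_mem_region_iff hx).1 (hyx ▸ (mk_mem_region_iff _).2 (Or.inl hy))
    · rintro (h | h)
      · exact ⟨⟨x, h⟩, rfl⟩
      · exact ⟨⟨-x, h⟩, (mk_eq_mk_iff' ℝ _ _ _ hx).2 ⟨-1, by simp⟩⟩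
  rw [← hrange]
  exact isConnected_range (continuous_mk'.comp (continuous_subtype_val.subtype_mk _))

theorem region_subset : region f ε ⊆ {p | ∀ i, f i p.rep ≠ 0} := by
  rintro p (h | h) i
  · exact map_ne_zero_of_mem_chamber h i
  · simpa using map_ne_zero_of_mem_chamber h i

theorem disjoint_region {i₀ : ι} (hε : ε i₀ = true) (hε' : ε' i₀ = true) (hne : ε ≠ ε') :
    Disjoint (region f ε) (region f ε') := by
  rw [disjoint_left]
  rintro p (h | h) (h' | h')
  · exact hne (eq_of_mem_chamber h h')
  · simpa [hε, hε'] using congrFun (eq_of_mem_chamber h (neg_mem_chamber_iff.1 h')) i₀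
  · simpa [hε, hε'] using congrFun (eq_of_mem_chamber (neg_mem_chamber_iff.1 h) h') i₀
  · exact hne (eq_of_mem_chamber h h')

theorem exists_mem_region (i₀ : ι) {p : RP2} (hp : ∀ i, f i p.rep ≠ 0) :
    ∃ ε ∈ chamberSigns f, ε i₀ = true ∧ p ∈ region f ε := by
  have hδ := mem_chamber_decide hp
  cases h : decide (0 < f i₀ p.rep)
  · have hδ' := neg_mem_chamber_not_comp_iff.2 hδ
    exact ⟨_, ⟨_, hδ'⟩, by simp [h], Or.inr hδ'⟩
  · exact ⟨_, ⟨_, hδ⟩, h, Or.inl hδ⟩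

theorem natCard_connectedComponents_eq_ncard [Finite ι] (i₀ : ι) :
    Nat.card (ConnectedComponents {p : RP2 | ∀ i, f i p.rep ≠ 0}) =
      {ε ∈ chamberSigns f | ε i₀ = true}.ncard := by
  have : Nonempty ι := ⟨i₀⟩
  rw [← Nat.card_coe_set_eq]
  refine natCard_connectedComponents_of_partition
    (fun ε : {ε ∈ chamberSigns f | ε i₀ = true} => region f ε) (fun _ => isOpen_region)
    (fun ε => isConnected_region ε.2.1)
    (fun ε ε' h => disjoint_region ε.2.2 ε'.2.2 (Subtype.coe_ne_coe.2 h)) ?_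
  refine (iUnion_subset fun _ => region_subset).antisymm fun p hp => ?_
  obtain ⟨ε, hε, hε₀, hp⟩ := exists_mem_region i₀ hp
  exact mem_iUnion.2 ⟨⟨ε, hε, hε₀⟩, hp⟩

theorem inGeneralPosition_dotProductEquiv {v : ι → Fin 3 → ℝ} (hv : ∀ i, v i ≠ 0)
    (hdistinct : ∀ i j, i ≠ j → projLine (v i) ≠ projLine (v j))
    (hgen : ∀ i j k, i ≠ j → j ≠ k → i ≠ k →
      projLine (v i) ∩ projLine (v j) ∩ projLine (v k) = ∅) :
    InGeneralPosition fun i => dotProductEquiv ℝ (Fin 3) (v i) := by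
  refine inGeneralPosition_of_finrank_eq_three (by simp) (fun i => by simpa using hv i)
    (fun i j hij hker => hdistinct i j hij ?_) (fun i j k hij hjk hik => ?_)
  · ext p
    induction p using Projectivization.ind with | h x hx =>
    rw [mk_mem_projLine_iff, mk_mem_projLine_iff, ← LinearMap.mem_ker, hker, LinearMap.mem_ker]
  · refine (Submodule.eq_bot_iff _).2 fun x hx => by_contra fun hx0 => ?_
    simp only [Submodule.mem_inf, LinearMap.mem_ker] at hx
    have hmem : mk ℝ x hx0 ∈ projLine (v i) ∩ projLine (v j) ∩ projLine (v k) :=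
      ⟨⟨(mk_mem_projLine_iff hx0).2 hx.1.1, (mk_mem_projLine_iff hx0).2 hx.1.2⟩,
        (mk_mem_projLine_iff hx0).2 hx.2⟩
    rwa [hgen i j k hij hjk hik] at hmem

end RP2

/-- An arrangement of `m` lines in general position in the real
projective plane (no two lines coincide, no point lies on three of the lines)
divides the plane into `binom(m,2) + 1` connected regions: the complement of
the union of the lines has exactly `m.choose 2 + 1` connected components. -/
theorem components_of_general_position_line_arrangement
    (m : ℕ) (v : Fin m → (Fin 3 → ℝ)) (hv : ∀ i, v i ≠ 0)
    (hdistinct : ∀ i j : Fin m, i ≠ j → projLine (v i) ≠ projLine (v j))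
    (hgen : ∀ (i j k : Fin m), i ≠ j → j ≠ k → i ≠ k →
      projLine (v i) ∩ projLine (v j) ∩ projLine (v k) = ∅) :
    Nat.card (ConnectedComponents ((⋃ i, projLine (v i))ᶜ : Set RP2)) =
      m.choose 2 + 1 := by
  cases m with
  | zero =>
    rw [iUnion_of_empty, compl_empty,
      natCard_connectedComponents_of_partition (fun _ : Unit => univ) (fun _ => isOpen_univ)
        (fun _ => isConnected_univ) (fun a b h => (h rfl).elim) (iUnion_const _)]
    simp
  | succ m =>
    have hcompl : (⋃ i, projLine (v i))ᶜ =
        {p : RP2 | ∀ i, dotProductEquiv ℝ (Fin 3) (v i) p.rep ≠ 0} := by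
      ext p
      simp [RP2.mem_projLine_iff]
    have hchambers := ncard_chamberSigns_of_inGeneralPosition
      (RP2.inGeneralPosition_dotProductEquiv hv hdistinct hgen)
    rw [Module.finrank_fin_fun, ← two_mul_ncard_chamberSigns_apply_eq_true 0] at hchambers
    rw [hcompl, RP2.natCard_connectedComponents_eq_ncard 0]
    simp [Finset.sum_range_succ, Nat.choose_succ_succ'] at hchambers ⊢
    omega
end

section
/- The Robinson polynomial R(1,3,-1) is nonnegative on all of R^3. -/
/-!
With `a = x²`, `b = y²`, `c = z²` the Robinson polynomial is Schur's cubic form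
`a(a-b)(a-c) + b(b-a)(b-c) + c(c-a)(c-b)`, which is nonnegative for nonnegative `a, b, c`:
when `a ≥ b ≥ c ≥ 0` the first two terms add up to `(a-b)²(a+b-c)` and the last one is
`c(a-c)(b-c)`.
-/

/-- The Robinson polynomial `R(1,3,-1)` as a function on `ℝ³`. -/
def robinson (x y z : ℝ) : ℝ :=
  x^6 + y^6 + z^6 + 3*x^2*y^2*z^2
    - (x^4*y^2 + x^4*z^2 + x^2*y^4 + x^2*z^4 + y^4*z^2 + y^2*z^4)

section Schur

variable {R : Type*} [CommRing R] [LinearOrder R] [IsStrictOrderedRing R]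

theorem schur_nonneg_of_le {a b c : R} (hc : 0 ≤ c) (hcb : c ≤ b) (hba : b ≤ a) :
    0 ≤ a * (a - b) * (a - c) + b * (b - a) * (b - c) + c * (c - a) * (c - b) := by
  have hleading : a * (a - b) * (a - c) + b * (b - a) * (b - c) = (a - b) ^ 2 * (a + b - c) := by
    ring
  have hlast : c * (c - a) * (c - b) = c * (a - c) * (b - c) := by ring
  rw [hleading, hlast]
  have hab : 0 ≤ a + b - c := by linarith
  have hac : 0 ≤ a - c := by linarith
  have hbc : 0 ≤ b - c := by linarith
  positivity

theorem schur_nonneg {a b c : R} (ha : 0 ≤ a) (hb : 0 ≤ b) (hc : 0 ≤ c) :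
    0 ≤ a * (a - b) * (a - c) + b * (b - a) * (b - c) + c * (c - a) * (c - b) := by
  rcases le_total a b with hab | hab <;> rcases le_total b c with hbc | hbc <;>
    rcases le_total a c with hac | hac <;>
    first
    | linarith [schur_nonneg_of_le (a := a) (b := b) (c := c) hc (by linarith) (by linarith)]
    | linarith [schur_nonneg_of_le (a := a) (b := c) (c := b) hb (by linarith) (by linarith)]
    | linarith [schur_nonneg_of_le (a := b) (b := a) (c := c) hc (by linarith) (by linarith)]
    | linarith [schur_nonneg_of_le (a := b) (b := c) (c := a) ha (by linarith) (by linarith)]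
    | linarith [schur_nonneg_of_le (a := c) (b := a) (c := b) hb (by linarith) (by linarith)]
    | linarith [schur_nonneg_of_le (a := c) (b := b) (c := a) ha (by linarith) (by linarith)]

end Schur

theorem robinson_eq_schur (x y z : ℝ) :
    robinson x y z = x ^ 2 * (x ^ 2 - y ^ 2) * (x ^ 2 - z ^ 2)
      + y ^ 2 * (y ^ 2 - x ^ 2) * (y ^ 2 - z ^ 2) + z ^ 2 * (z ^ 2 - x ^ 2) * (z ^ 2 - y ^ 2) := by
  unfold robinson
  ring

/-- the Robinson polynomial `R(1,3,-1)` is nonnegative on `ℝ³`. -/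
theorem robinson_nonneg (x y z : ℝ) : 0 ≤ robinson x y z := by
  rw [robinson_eq_schur]
  exact schur_nonneg (sq_nonneg x) (sq_nonneg y) (sq_nonneg z)
end
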